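/- With the same setup (sorted scores g, softmax weights α, gap δ = g_K − g_{K+1} > 0, tail mass ε = ∑_{j>K} α_j < 1, value vectors v_j with ‖v_j‖ ≤ V), the renormalized pruned attention output c' = ∑_{j ≤ K} (α_j/(1−ε)) v_j satisfies ‖∑_j α_j v_j − c'‖ ≤ 2V · ((n−K)/K) · exp(−δ). -/

import Mathlib

/-!
Each of the `n - K` tail scores is at most `g_K` and each of the `K` head scores at least
`g_{K-1}`, so the tail mass is `ε ≤ (n - K) e^{g_K} / (K e^{g_{K-1}}) = (n - K)/K · e^{-δ}`.
The renormalized head sum is the head part of the full sum scaled by `1/(1 - ε)`, so the error is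
the tail part (norm `≤ εV`) plus `(1/(1 - ε) - 1)` times the head part
(norm `≤ ε/(1 - ε) · (1 - ε)V = εV`).
-/

open Finset Real

noncomputable def softmax {ι : Type*} [Fintype ι] (g : ι → ℝ) (j : ι) : ℝ :=
  exp (g j) / ∑ ℓ, exp (g ℓ)

section Softmax

variable {ι : Type*} [Fintype ι] (g : ι → ℝ)

theorem softmax_nonneg (j : ι) : 0 ≤ softmax g j := by
  unfold softmax
  positivity

theorem sum_softmax [Nonempty ι] : ∑ j, softmax g j = 1 := by
  simp only [softmax, ← Finset.sum_div]
  exact div_self (Finset.sum_pos (fun ℓ _ => exp_pos (g ℓ)) univ_nonempty).ne'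

theorem sum_softmax_le_card_div_card_mul_exp {s t : Finset ι} (hs : s.Nonempty) {a b : ℝ}
    (ha : ∀ i ∈ s, a ≤ g i) (hb : ∀ j ∈ t, g j ≤ b) :
    ∑ j ∈ t, softmax g j ≤ #t / #s * exp (b - a) := by
  have hnum : ∑ j ∈ t, exp (g j) ≤ #t * exp b := by
    simpa using Finset.sum_le_sum fun j hj => exp_le_exp.2 (hb j hj)
  have hden : #s * exp a ≤ ∑ ℓ, exp (g ℓ) :=
    calc (#s : ℝ) * exp a ≤ ∑ i ∈ s, exp (g i) := by
          simpa using Finset.sum_le_sum fun i hi => exp_le_exp.2 (ha i hi)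
      _ ≤ ∑ ℓ, exp (g ℓ) :=
          Finset.sum_le_sum_of_subset_of_nonneg (subset_univ s) fun ℓ _ _ => (exp_pos _).le
  have hsa : 0 < (#s : ℝ) * exp a := by
    have : (0 : ℝ) < #s := by exact_mod_cast hs.card_pos
    positivity
  calc ∑ j ∈ t, softmax g j = (∑ j ∈ t, exp (g j)) / ∑ ℓ, exp (g ℓ) := by
        simp only [softmax, Finset.sum_div]
    _ ≤ #t * exp b / (#s * exp a) := by gcongr
    _ = #t / #s * exp (b - a) := by rw [exp_sub]; field_simp

end Softmax

-- Covers the junk case `a = 0` (where `0⁻¹ = 0`) uniformly with `0 < a`.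
theorem abs_one_sub_inv_mul_le {a : ℝ} (ha₀ : 0 ≤ a) (ha₁ : a ≤ 1) : |1 - a⁻¹| * a ≤ 1 - a := by
  rcases ha₀.eq_or_lt with rfl | ha
  · simp
  rw [abs_sub_comm, abs_of_nonneg (sub_nonneg.2 (one_le_inv₀ ha |>.2 ha₁)), sub_mul,
    inv_mul_cancel₀ ha.ne', one_mul]

section Pruning

variable {ι E : Type*} [NormedAddCommGroup E] [NormedSpace ℝ E]

theorem norm_sum_smul_le_sum_mul {s : Finset ι} {α : ι → ℝ} (hα : ∀ j ∈ s, 0 ≤ α j)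
    {v : ι → E} {V : ℝ} (hV : ∀ j ∈ s, ‖v j‖ ≤ V) :
    ‖∑ j ∈ s, α j • v j‖ ≤ (∑ j ∈ s, α j) * V := by
  rw [Finset.sum_mul]
  refine (norm_sum_le _ _).trans (Finset.sum_le_sum fun j hj => ?_)
  rw [norm_smul, norm_of_nonneg (hα j hj)]
  exact mul_le_mul_of_nonneg_left (hV j hj) (hα j hj)

theorem norm_sum_smul_sub_renormalized_le [Fintype ι] [DecidableEq ι] {α : ι → ℝ}
    (hα₀ : ∀ j, 0 ≤ α j) (hα₁ : ∑ j, α j = 1) (s : Finset ι) {v : ι → E} {V : ℝ}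
    (hV : ∀ j, ‖v j‖ ≤ V) :
    ‖∑ j, α j • v j - ∑ j ∈ s, (α j / ∑ i ∈ s, α i) • v j‖ ≤ 2 * V * ∑ j ∈ sᶜ, α j := by
  set a := ∑ i ∈ s, α i
  set b := ∑ j ∈ sᶜ, α j
  have hab : a + b = 1 := by rw [sum_add_sum_compl, hα₁]
  have hb₀ : 0 ≤ b := Finset.sum_nonneg fun j _ => hα₀ j
  have hV₀ : 0 ≤ V := by
    obtain ⟨j⟩ : Nonempty ι := by
      by_contra h
      simp [not_nonempty_iff.1 h] at hα₁
    exact (norm_nonneg _).trans (hV j)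
  have hsplit : ∑ j, α j • v j - ∑ j ∈ s, (α j / a) • v j
      = ∑ j ∈ sᶜ, α j • v j + (1 - a⁻¹) • ∑ j ∈ s, α j • v j := by
    simp only [div_eq_inv_mul, ← smul_smul, ← Finset.smul_sum, sub_smul, one_smul,
      ← sum_add_sum_compl s fun j => α j • v j]
    abel
  have hhead := norm_sum_smul_le_sum_mul (s := s) (fun j _ => hα₀ j) fun j _ => hV j
  have htail := norm_sum_smul_le_sum_mul (s := sᶜ) (fun j _ => hα₀ j) fun j _ => hV j
  calc _ ≤ b * V + |1 - a⁻¹| * (a * V) := by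
        rw [hsplit]
        refine (norm_add_le _ _).trans (add_le_add htail ?_)
        rw [norm_smul, norm_eq_abs]
        exact mul_le_mul_of_nonneg_left hhead (abs_nonneg _)
    _ ≤ b * V + b * V := by
        rw [← mul_assoc]
        gcongr
        exact (abs_one_sub_inv_mul_le (Finset.sum_nonneg fun j _ => hα₀ j) (by linarith)).trans
          (by linarith)
    _ = 2 * V * b := by ring

end Pruning

theorem pruned_attention_error_exp_gap_general {E : Type*} [NormedAddCommGroup E] [NormedSpace ℝ E]
    (n K : ℕ) (hK : 1 ≤ K) (hKn : K < n)
    (g : Fin n → ℝ) (hsorted : ∀ i j : Fin n, i ≤ j → g j ≤ g i)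
    (α : Fin n → ℝ) (hα : ∀ j, α j = Real.exp (g j) / ∑ ℓ, Real.exp (g ℓ))
    (δ : ℝ)
    (hδ : δ = g ⟨K - 1, lt_trans (Nat.sub_lt (lt_of_lt_of_le Nat.zero_lt_one hK) Nat.zero_lt_one) hKn⟩
            - g ⟨K, hKn⟩)
    (ε : ℝ) (hε : ε = ∑ j ∈ Finset.univ.filter (fun j : Fin n => K ≤ j.val), α j)
    (v : Fin n → E) (V : ℝ) (hV : ∀ j, ‖v j‖ ≤ V) :
    ‖(∑ j, α j • v j)
        - ∑ j ∈ Finset.univ.filter (fun j : Fin n => j.val < K), (α j / (1 - ε)) • v j‖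
      ≤ 2 * V * (((n - K : ℝ) / K) * Real.exp (-δ)) := by
  obtain rfl : α = softmax g := funext hα
  have : Nonempty (Fin n) := ⟨⟨0, by omega⟩⟩
  set S := univ.filter fun j : Fin n => j.val < K
  have hmemS (i : Fin n) : i ∈ S ↔ i.val < K := by simp [S]
  have hT : univ.filter (fun j : Fin n => K ≤ j.val) = Sᶜ := by ext; simp [S]
  have hcard : #S = K := by simp [S, Fin.card_filter_val_lt, hKn.le]
  have hS : ∑ j ∈ S, softmax g j = 1 - ε := by
    rw [hε, hT, ← sum_softmax g, ← sum_add_sum_compl S]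
    ring
  have htail : ε ≤ (n - K : ℝ) / K * exp (-δ) := by
    have hhead (i : Fin n) (hi : i ∈ S) : g ⟨K - 1, by omega⟩ ≤ g i :=
      hsorted i _ (Fin.le_def.2 (show i.val ≤ K - 1 by have := (hmemS i).1 hi; omega))
    have hrest (j : Fin n) (hj : j ∈ Sᶜ) : g j ≤ g ⟨K, hKn⟩ :=
      hsorted _ j (Fin.le_def.2 (by simpa [hmemS] using hj))
    have hgap := sum_softmax_le_card_div_card_mul_exp g
      ⟨⟨0, by omega⟩, (hmemS _).2 (show 0 < K by omega)⟩ hhead hrest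
    rw [card_compl, hcard, Fintype.card_fin, Nat.cast_sub hKn.le, ← hT, ← hε] at hgap
    rwa [hδ, neg_sub]
  have hV₀ : 0 ≤ V := (norm_nonneg _).trans (hV ⟨0, by omega⟩)
  have hprune := norm_sum_smul_sub_renormalized_le (softmax_nonneg g) (sum_softmax g) S hV
  rw [hS, ← hT, ← hε] at hprune
  exact hprune.trans (by gcongr)

theorem pruned_attention_error_exp_gap {E : Type*} [NormedAddCommGroup E] [NormedSpace ℝ E]
    (n K : ℕ) (hK : 1 ≤ K) (hKn : K < n)
    (g : Fin n → ℝ) (hsorted : ∀ i j : Fin n, i ≤ j → g j ≤ g i)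
    (α : Fin n → ℝ) (hα : ∀ j, α j = Real.exp (g j) / ∑ ℓ, Real.exp (g ℓ))
    (δ : ℝ)
    (hδ : δ = g ⟨K - 1, lt_trans (Nat.sub_lt (lt_of_lt_of_le Nat.zero_lt_one hK) Nat.zero_lt_one) hKn⟩
            - g ⟨K, hKn⟩)
    (hδpos : 0 < δ)
    (ε : ℝ) (hε : ε = ∑ j ∈ Finset.univ.filter (fun j : Fin n => K ≤ j.val), α j)
    (hε1 : ε < 1)
    (v : Fin n → E) (V : ℝ) (hV : ∀ j, ‖v j‖ ≤ V) :
    ‖(∑ j, α j • v j)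
        - ∑ j ∈ Finset.univ.filter (fun j : Fin n => j.val < K), (α j / (1 - ε)) • v j‖
      ≤ 2 * V * (((n - K : ℝ) / K) * Real.exp (-δ)) :=
  pruned_attention_error_exp_gap_general n K hK hKn g hsorted α hα δ hδ ε hε v V hV
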